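/- arXiv:2008.10581 — 5 statements merged into one kernel-verified Lean document; each statement's English description precedes it below -/
import Mathlib

section
/- Let ρ_a, ρ_b : X → [0,∞) be measurable and integrable with Z_a := ∫ ρ_a dμ > 0 and Z_b := ∫ ρ_b dμ > 0, and let P_a, P_b be the probability measures with densities ρ_a/Z_a and ρ_b/Z_b. Let ρᴮ : X → [0,∞) be measurable with 0 < Zᴮ := ∫ ρᴮ dμ < ∞ and with ρᴮ(x) = 0 whenever ρ_a(x) = 0 or ρ_b(x) = 0, and define the ratios ρᴮ/ρ_a and ρᴮ/ρ_b to be 0 where the denominators vanish. Then E_{P_a}[ρᴮ(X)/ρ_a(X)] = Zᴮ/Z_a and E_{P_b}[ρᴮ(X)/ρ_b(X)] = Zᴮ/Z_b, and hence the bridge-sampling identity Z_b/Z_a = E_{P_a}[ρᴮ(X)/ρ_a(X)] / E_{P_b}[ρᴮ(X)/ρ_b(X)] holds. -/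
open MeasureTheory Real

/-! Against `P = (ρ / Z) • μ` the ratio `f / ρ` has density-weighted integrand `f / Z`, because `f`
vanishes wherever `ρ` does; so `E_P[f / ρ] = (∫ f dμ) / Z`. Applying this to `P_a` and `P_b` with
`f = ρᴮ` and dividing the two results cancels `Zᴮ`. -/

theorem integral_div_withDensity_normalized {X : Type*} [MeasurableSpace X] {μ : Measure X}
    {ρ f : X → ℝ} (hρ : Measurable ρ) (hρ_nonneg : ∀ᵐ x ∂μ, 0 ≤ ρ x)
    (hf : ∀ᵐ x ∂μ, ρ x = 0 → f x = 0) {Z : ℝ} (hZ : 0 ≤ Z) :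
    ∫ x, f x / ρ x ∂μ.withDensity (fun x => ENNReal.ofReal (ρ x / Z)) = (∫ x, f x ∂μ) / Z := by
  rw [integral_withDensity_eq_integral_toReal_smul (hρ.div_const Z).ennreal_ofReal
    (.of_forall fun _ => ENNReal.ofReal_lt_top), ← integral_div]
  refine integral_congr_ae ?_
  filter_upwards [hρ_nonneg, hf] with x hx hfx
  rw [ENNReal.toReal_ofReal (div_nonneg hx hZ), smul_eq_mul, div_mul_eq_mul_div,
    mul_div_cancel_of_imp' hfx]

theorem bridge_sampling_identity_general
    {X : Type*} [MeasurableSpace X] (μ : Measure X)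
    (ρa ρb : X → ℝ) (hρa : Measurable ρa) (hρb : Measurable ρb)
    (hρanonneg : ∀ x, 0 ≤ ρa x) (hρbnonneg : ∀ x, 0 ≤ ρb x)
    (Za Zb : ℝ)
    (hZapos : 0 < Za) (hZbpos : 0 < Zb)
    (Pa Pb : Measure X)
    (hPa : Pa = μ.withDensity (fun x => ENNReal.ofReal (ρa x / Za)))
    (hPb : Pb = μ.withDensity (fun x => ENNReal.ofReal (ρb x / Zb)))
    (ρB : X → ℝ)
    (ZB : ℝ) (hZB : ZB = ∫ x, ρB x ∂μ) (hZBpos : 0 < ZB)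
    (hsupp : ∀ x, ρa x = 0 ∨ ρb x = 0 → ρB x = 0) :
    (∫ x, ρB x / ρa x ∂Pa) = ZB / Za
    ∧ (∫ x, ρB x / ρb x ∂Pb) = ZB / Zb
    ∧ Zb / Za = (∫ x, ρB x / ρa x ∂Pa) / (∫ x, ρB x / ρb x ∂Pb) := by
  have ha : ∫ x, ρB x / ρa x ∂Pa = ZB / Za := by
    rw [hPa, hZB]
    exact integral_div_withDensity_normalized hρa (.of_forall hρanonneg)
      (.of_forall fun x h => hsupp x (.inl h)) hZapos.le
  have hb : ∫ x, ρB x / ρb x ∂Pb = ZB / Zb := by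
    rw [hPb, hZB]
    exact integral_div_withDensity_normalized hρb (.of_forall hρbnonneg)
      (.of_forall fun x h => hsupp x (.inr h)) hZbpos.le
  exact ⟨ha, hb, by rw [ha, hb, div_div_div_cancel_left' _ _ hZBpos.ne']⟩

/-- Bridge sampling identity: `E_{P_a}[ρᴮ/ρ_a] = Zᴮ/Z_a`, `E_{P_b}[ρᴮ/ρ_b] = Zᴮ/Z_b`,
hence `Z_b/Z_a = E_{P_a}[ρᴮ/ρ_a] / E_{P_b}[ρᴮ/ρ_b]`. (Ratios are `0` where denominators
vanish, which is Lean's division convention.) -/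
theorem bridge_sampling_identity
    {X : Type*} [MeasurableSpace X] (μ : Measure X) [SigmaFinite μ]
    (ρa ρb : X → ℝ) (hρa : Measurable ρa) (hρb : Measurable ρb)
    (hρanonneg : ∀ x, 0 ≤ ρa x) (hρbnonneg : ∀ x, 0 ≤ ρb x)
    (hρaint : Integrable ρa μ) (hρbint : Integrable ρb μ)
    (Za Zb : ℝ) (hZa : Za = ∫ x, ρa x ∂μ) (hZb : Zb = ∫ x, ρb x ∂μ)
    (hZapos : 0 < Za) (hZbpos : 0 < Zb)
    (Pa Pb : Measure X)
    (hPa : Pa = μ.withDensity (fun x => ENNReal.ofReal (ρa x / Za)))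
    (hPb : Pb = μ.withDensity (fun x => ENNReal.ofReal (ρb x / Zb)))
    (ρB : X → ℝ) (hρB : Measurable ρB) (hρBnonneg : ∀ x, 0 ≤ ρB x)
    (hρBint : Integrable ρB μ)
    (ZB : ℝ) (hZB : ZB = ∫ x, ρB x ∂μ) (hZBpos : 0 < ZB)
    (hsupp : ∀ x, ρa x = 0 ∨ ρb x = 0 → ρB x = 0) :
    (∫ x, ρB x / ρa x ∂Pa) = ZB / Za
    ∧ (∫ x, ρB x / ρb x ∂Pb) = ZB / Zb
    ∧ Zb / Za = (∫ x, ρB x / ρa x ∂Pa) / (∫ x, ρB x / ρb x ∂Pb) :=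
  bridge_sampling_identity_general μ ρa ρb hρa hρb hρanonneg hρbnonneg Za Zb hZapos hZbpos Pa Pb hPa
    hPb ρB ZB hZB hZBpos hsupp
end

section
/- Let f : X → ℝ, γ ∈ ℝ, β_k ≥ 0, and points x₁, …, x_N ∈ X. Define b(β) := (1/N)·Σ_{i=1}^{N} exp((β − β_k)·min(γ − f(x_i), 0)) and a := (1/N)·Σ_{i=1}^{N} 1{f(x_i) ≤ γ}. Then: (i) b is continuous and nonincreasing on ℝ with b(β_k) = 1; (ii) b(β) ≥ a for every β ∈ ℝ; (iii) b(β) → a as β → ∞; and (iv) if a ≤ s and a < α ≤ 1 for constants α, s ∈ (0,1], then the set {β ≥ β_k : b(β) ≥ α and a/b(β) ≤ s} is nonempty, bounded above, and contains its supremum, so the maximization problem max{β ≥ β_k : b(β) ≥ α, a ≤ s·b(β)} has a finite maximizer. -/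
open Filter Topology

/-- Properties of the empirical annealing functions: `b` is continuous, nonincreasing,
`b(β_k) = 1`, `b ≥ a` everywhere, `b(β) → a` as `β → ∞`, and for `α, s ∈ (0,1]` with
`a ≤ s` and `a < α`, the feasible set `{β ≥ β_k : b(β) ≥ α, a/b(β) ≤ s}` is nonempty,
bounded above, and contains its supremum (so the adaptive maximization has a finite
maximizer). -/
theorem empirical_annealing_properties
    {X : Type*} (f : X → ℝ) (γ : ℝ) (βk : ℝ) (hβk : 0 ≤ βk)
    (N : ℕ) (hN : 1 ≤ N) (x : Fin N → X)
    (b : ℝ → ℝ)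
    (hb : ∀ β, b β = (1 / N : ℝ) * ∑ i, Real.exp ((β - βk) * min (γ - f (x i)) 0))
    (a : ℝ)
    (ha : a = (1 / N : ℝ) * ∑ i, if f (x i) ≤ γ then (1 : ℝ) else 0) :
    Continuous b ∧ Antitone b ∧ b βk = 1
    ∧ (∀ β, a ≤ b β)
    ∧ Tendsto b atTop (𝓝 a)
    ∧ (∀ α s : ℝ, 0 < α → α ≤ 1 → 0 < s → s ≤ 1 → a ≤ s → a < α →
        ({β | βk ≤ β ∧ α ≤ b β ∧ a / b β ≤ s}.Nonempty
        ∧ BddAbove {β | βk ≤ β ∧ α ≤ b β ∧ a / b β ≤ s}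
        ∧ sSup {β | βk ≤ β ∧ α ≤ b β ∧ a / b β ≤ s}
            ∈ {β | βk ≤ β ∧ α ≤ b β ∧ a / b β ≤ s})) := by
  have hNpos : (0 : ℝ) < N := by exact_mod_cast Nat.lt_of_lt_of_le Nat.zero_lt_one hN
  have hNinv : (0 : ℝ) < 1 / N := by positivity
  set m : Fin N → ℝ := fun i => min (γ - f (x i)) 0 with hm
  have hm0 : ∀ i, m i ≤ 0 := fun i => min_le_right _ _
  have hbf : b = fun β => (1 / N : ℝ) * ∑ i, Real.exp ((β - βk) * m i) := funext hb
  -- continuity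
  have hcont : Continuous b := by
    rw [hbf]
    exact continuous_const.mul (continuous_finset_sum _ fun i _ =>
      Real.continuous_exp.comp ((continuous_id.sub continuous_const).mul continuous_const))
  -- antitone
  have hanti : Antitone b := by
    intro β₁ β₂ h
    rw [hbf]
    refine mul_le_mul_of_nonneg_left (Finset.sum_le_sum fun i _ => ?_) hNinv.le
    exact Real.exp_le_exp.mpr (mul_le_mul_of_nonpos_right (by linarith) (hm0 i))
  -- b βk = 1
  have hb1 : b βk = 1 := by
    rw [hb]
    simp [Finset.sum_const, Finset.card_univ]
    field_simp
  -- b ≥ a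
  have hba : ∀ β, a ≤ b β := by
    intro β
    rw [hb, ha]
    refine mul_le_mul_of_nonneg_left (Finset.sum_le_sum fun i _ => ?_) hNinv.le
    split_ifs with h
    · have : min (γ - f (x i)) 0 = 0 := min_eq_right (by linarith)
      rw [this, mul_zero, Real.exp_zero]
    · exact (Real.exp_pos _).le
  -- tendsto
  have htend : Tendsto b atTop (𝓝 a) := by
    rw [hbf, ha]
    refine Tendsto.const_mul _ (tendsto_finset_sum _ fun i _ => ?_)
    by_cases h : f (x i) ≤ γ
    · have : m i = 0 := min_eq_right (by linarith)
      simp [this, h, tendsto_const_nhds]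
    · have hneg : m i < 0 := by
        have : γ - f (x i) < 0 := by push_neg at h; linarith
        exact min_lt_iff.mpr (Or.inl this)
      rw [if_neg h]
      have h1 : Tendsto (fun β : ℝ => (β - βk) * m i) atTop atBot :=
        Tendsto.atTop_mul_const_of_neg hneg (tendsto_atTop_add_const_right _ _ tendsto_id)
      simpa using h1
  -- positivity of b
  have hbpos : ∀ β, 0 < b β := by
    intro β
    rw [hb]
    refine mul_pos hNinv (Finset.sum_pos (fun i _ => Real.exp_pos _) ?_)
    haveI : Nonempty (Fin N) := ⟨⟨0, hN⟩⟩
    exact Finset.univ_nonempty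
  refine ⟨hcont, hanti, hb1, hba, htend, ?_⟩
  intro α s hα hα1 hs hs1 has haα
  set S : Set ℝ := {β | βk ≤ β ∧ α ≤ b β ∧ a / b β ≤ s} with hS
  have hne : S.Nonempty := ⟨βk, le_refl _, by rw [hb1]; exact hα1, by rw [hb1, div_one]; exact has⟩
  have hbdd : BddAbove S := by
    have hev : ∀ᶠ β in atTop, b β < α := htend.eventually (Filter.Tendsto.eventually_lt_const haα tendsto_id)
    obtain ⟨M, hM⟩ := eventually_atTop.mp hev
    refine ⟨M, fun β hβ => ?_⟩
    by_contra h
    exact absurd hβ.2.1 (not_le.mpr (hM β (le_of_lt (not_le.mp h))))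
  have hclosed : IsClosed S := by
    have h1 : IsClosed {β : ℝ | βk ≤ β} := isClosed_le continuous_const continuous_id
    have h2 : IsClosed {β : ℝ | α ≤ b β} := isClosed_le continuous_const hcont
    have h3 : IsClosed {β : ℝ | a / b β ≤ s} :=
      isClosed_le (continuous_const.div hcont fun β => (hbpos β).ne') continuous_const
    exact (h1.inter (h2.inter h3))
  exact ⟨hne, hbdd, hclosed.csSup_mem hne hbdd⟩
end

section
/- Assume p_γ > 0, let 0 = β₀ ≤ β₁ ≤ ⋯ ≤ β_K with K ≥ 1, let N ≥ 1, and write G_k := G(P_{β_{k−1}}, P_{β_k}) for k = 1,…,K and R_k := G(P_{β_{k−1}}, P_{β_{k+1}}) / (G(P_{β_{k−1}}, P_{β_k})·G(P_{β_k}, P_{β_{k+1}})) for k = 1,…,K−1 (all well-defined since each G is strictly positive). If G_k⁻² ≤ D for all k, where D ≥ 1, and 1/3 ≤ s ≤ 1, then (2/N)·Σ_{k=1}^{K}(G_k⁻² − 1) − (2/N)·Σ_{k=1}^{K−1}(R_k − 1) + (1 − s)/(s·N) ≤ 2·K·D/N. -/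
open MeasureTheory Real Finset

/-! The Bhattacharyya coefficients are integrals of square roots, hence nonnegative, so each
`R_k - 1 ≥ -1`; together with `G_k⁻² - 1 ≤ D - 1` and `(1 - s)/s ≤ 2` for `s ≥ 1/3`,
`N` times the left-hand side is at most `2K(D - 1) + 2(K - 1) + 2 = 2KD`. -/

lemma sum_sub_one_le_card_mul {ι : Type*} (t : Finset ι) {a : ι → ℝ} {D : ℝ}
    (h : ∀ i ∈ t, a i ≤ D) : ∑ i ∈ t, (a i - 1) ≤ #t * (D - 1) := by
  simpa [mul_comm] using sum_le_card_nsmul t (fun i => a i - 1) (D - 1)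
    fun i hi => by linarith [h i hi]

lemma neg_card_le_sum_sub_one {ι : Type*} (t : Finset ι) {a : ι → ℝ}
    (h : ∀ i ∈ t, 0 ≤ a i) : -(#t : ℝ) ≤ ∑ i ∈ t, (a i - 1) := by
  rw [sum_sub_distrib, sum_const, nsmul_one]
  linarith [sum_nonneg h]

lemma one_sub_div_le_two {s : ℝ} (hs : 1 / 3 ≤ s) : (1 - s) / s ≤ 2 := by
  rw [div_le_iff₀ (by linarith)]
  linarith

lemma ladder_sum_bound {K : ℕ} (hK : 1 ≤ K) {a r : ℕ → ℝ} {D s : ℝ}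
    (ha : ∀ k ∈ range K, a k ≤ D) (hr : ∀ k ∈ range (K - 1), 0 ≤ r k) (hs : 1 / 3 ≤ s) :
    2 * ∑ k ∈ range K, (a k - 1) - 2 * ∑ k ∈ range (K - 1), (r k - 1) + (1 - s) / s
      ≤ 2 * K * D := by
  have hA := sum_sub_one_le_card_mul _ ha
  have hR := neg_card_le_sum_sub_one _ hr
  rw [card_range] at hA hR
  rw [Nat.cast_sub hK, Nat.cast_one] at hR
  linarith [one_sub_div_le_two hs]

theorem relative_mse_bound_general
    {X : Type*} [MeasurableSpace X] (μ : Measure X)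
    (ρ : ℝ → X → ℝ)
    (Z : ℝ → ℝ)
    (K : ℕ) (hK : 1 ≤ K) (N : ℕ)
    (β : ℕ → ℝ)
    (G : ℝ → ℝ → ℝ)
    (hG : ∀ b b', G b b' = ∫ x, Real.sqrt ((ρ b x / Z b) * (ρ b' x / Z b')) ∂μ)
    (D : ℝ)
    (hGD : ∀ k ∈ Finset.range K, (G (β k) (β (k + 1)))⁻¹ ^ 2 ≤ D)
    (s : ℝ) (hs : 1 / 3 ≤ s) :
    (2 / N) * (∑ k ∈ Finset.range K, ((G (β k) (β (k + 1)))⁻¹ ^ 2 - 1))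
    - (2 / N) * (∑ k ∈ Finset.range (K - 1),
        (G (β k) (β (k + 2)) / (G (β k) (β (k + 1)) * G (β (k + 1)) (β (k + 2))) - 1))
    + (1 - s) / (s * N)
    ≤ 2 * K * D / N := by
  have hG_nonneg (b b' : ℝ) : 0 ≤ G b b' :=
    (hG b b').symm ▸ integral_nonneg fun _ => sqrt_nonneg _
  have hR_nonneg : ∀ k ∈ range (K - 1), 0 ≤
      G (β k) (β (k + 2)) / (G (β k) (β (k + 1)) * G (β (k + 1)) (β (k + 2))) :=
    fun k _ => div_nonneg (hG_nonneg _ _) (mul_nonneg (hG_nonneg _ _) (hG_nonneg _ _))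
  calc _ = (2 * ∑ k ∈ range K, ((G (β k) (β (k + 1)))⁻¹ ^ 2 - 1)
        - 2 * ∑ k ∈ range (K - 1),
          (G (β k) (β (k + 2)) / (G (β k) (β (k + 1)) * G (β (k + 1)) (β (k + 2))) - 1)
        + (1 - s) / s) / N := by ring
    _ ≤ 2 * K * D / N :=
      div_le_div_of_nonneg_right (ladder_sum_bound hK hGD hR_nonneg hs) N.cast_nonneg

/-- The asymptotic relative mean-square error bound of Proposition 1: if the inverse
squared Bhattacharyya coefficients along the ladder are bounded by `D ≥ 1` and
`1/3 ≤ s ≤ 1`, then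
`(2/N)·Σ_{k=1}^{K}(G_k⁻² − 1) − (2/N)·Σ_{k=1}^{K−1}(R_k − 1) + (1−s)/(s·N) ≤ 2KD/N`. -/
theorem relative_mse_bound
    {X : Type*} [MeasurableSpace X] (μ : Measure X) [SigmaFinite μ]
    (ρ₀ : X → ℝ) (hρ₀meas : Measurable ρ₀) (hρ₀nonneg : ∀ x, 0 ≤ ρ₀ x)
    (hρ₀int : Integrable ρ₀ μ)
    (f : X → ℝ) (hfmeas : Measurable f) (γ : ℝ)
    (ρ : ℝ → X → ℝ) (hρ : ∀ β x, ρ β x = ρ₀ x * Real.exp (β * min (γ - f x) 0))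
    (Z : ℝ → ℝ) (hZ : ∀ β, Z β = ∫ x, ρ β x ∂μ)
    (hZ₀pos : 0 < Z 0)
    (pγ : ℝ) (hpγ : pγ = (Z 0)⁻¹ * ∫ x in {x | f x ≤ γ}, ρ₀ x ∂μ)
    (hpγpos : 0 < pγ)
    (K : ℕ) (hK : 1 ≤ K) (N : ℕ) (hN : 1 ≤ N)
    (β : ℕ → ℝ) (hβ0 : β 0 = 0) (hβmono : Monotone β)
    (G : ℝ → ℝ → ℝ)
    (hG : ∀ b b', G b b' = ∫ x, Real.sqrt ((ρ b x / Z b) * (ρ b' x / Z b')) ∂μ)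
    (D : ℝ) (hD : 1 ≤ D)
    (hGD : ∀ k ∈ Finset.range K, (G (β k) (β (k + 1)))⁻¹ ^ 2 ≤ D)
    (s : ℝ) (hs : 1 / 3 ≤ s) (hs1 : s ≤ 1) :
    (2 / N) * (∑ k ∈ Finset.range K, ((G (β k) (β (k + 1)))⁻¹ ^ 2 - 1))
    - (2 / N) * (∑ k ∈ Finset.range (K - 1),
        (G (β k) (β (k + 2)) / (G (β k) (β (k + 1)) * G (β (k + 1)) (β (k + 2))) - 1))
    + (1 - s) / (s * N)
    ≤ 2 * K * D / N :=
  relative_mse_bound_general μ ρ Z K hK N β G hG D hGD s hs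
end

section
/- Assume p_γ > 0 and let 0 ≤ β ≤ β′, with Zᴮ := ∫ √(ρ_β·ρ_{β′}) dμ > 0 and G := G(P_β, P_{β′}) the Bhattacharyya coefficient, ratios defined to be 0 where denominators vanish. Then the sum of the squared coefficients of variation of the numerator and denominator of the geometric-bridge estimator satisfies Var_{P_β}(√(ρ_{β′}(X)/ρ_β(X))) / (E_{P_β}[√(ρ_{β′}(X)/ρ_β(X))])² + Var_{P_{β′}}(√(ρ_β(X)/ρ_{β′}(X))) / (E_{P_{β′}}[√(ρ_β(X)/ρ_{β′}(X))])² = 2·(G⁻² − 1). -/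
/-!
Under `P_β` the statistic `√(ρ_{β'}/ρ_β)` has mean `Z^B/Z_β` and second moment `Z_{β'}/Z_β`
(the two densities vanish at the same points, namely where `ρ₀` does), so its squared
coefficient of variation is `Z_β Z_{β'}/(Z^B)² - 1 = G⁻² - 1`; the same holds with `β` and `β'`
exchanged. All normalizing constants involved are positive because every `ρ_β` with `β ≥ 0`
agrees with `ρ₀` on `{f ≤ γ}`, a set of positive `ρ₀`-mass since `p_γ > 0`.
-/

open MeasureTheory Real ProbabilityTheory

section WithDensityOfReal

variable {X : Type*} [MeasurableSpace X] {μ : Measure X} {w : X → ℝ}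

lemma integral_withDensity_ofReal (hw : Measurable w) (hw0 : ∀ x, 0 ≤ w x) (g : X → ℝ) :
    ∫ x, g x ∂μ.withDensity (fun x => ENNReal.ofReal (w x)) = ∫ x, w x * g x ∂μ := by
  rw [integral_withDensity_eq_integral_toReal_smul hw.ennreal_ofReal
    (ae_of_all _ fun _ => ENNReal.ofReal_lt_top)]
  simp only [ENNReal.toReal_ofReal (hw0 _), smul_eq_mul]

lemma integrable_withDensity_ofReal_iff (hw : Measurable w) (hw0 : ∀ x, 0 ≤ w x)
    {g : X → ℝ} :
    Integrable g (μ.withDensity fun x => ENNReal.ofReal (w x)) ↔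
      Integrable (fun x => w x * g x) μ := by
  rw [integrable_withDensity_iff_integrable_smul' hw.ennreal_ofReal
    (ae_of_all _ fun _ => ENNReal.ofReal_lt_top)]
  simp only [ENNReal.toReal_ofReal (hw0 _), smul_eq_mul]

lemma isProbabilityMeasure_withDensity_ofReal_div (hw : Integrable w μ) (hw0 : ∀ x, 0 ≤ w x)
    {Z : ℝ} (hZ : ∫ x, w x ∂μ = Z) (hZ_pos : 0 < Z) :
    IsProbabilityMeasure (μ.withDensity fun x => ENNReal.ofReal (w x / Z)) := by
  constructor
  rw [withDensity_apply _ MeasurableSet.univ, Measure.restrict_univ,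
    ← ofReal_integral_eq_lintegral_ofReal (hw.div_const Z)
      (ae_of_all _ fun x => div_nonneg (hw0 x) hZ_pos.le),
    integral_div, hZ, div_self hZ_pos.ne', ENNReal.ofReal_one]

end WithDensityOfReal

lemma mul_sqrt_div_eq_sqrt_mul {a b : ℝ} (ha : 0 ≤ a) (hb : 0 ≤ b) :
    a * √(b / a) = √(a * b) := by
  rcases ha.eq_or_lt with rfl | ha
  · simp
  · rw [sqrt_div hb, sqrt_mul ha.le, mul_div_left_comm, div_sqrt, mul_comm]

section GeometricBridge

variable {X : Type*} [MeasurableSpace X] {μ : Measure X} {ρa ρb : X → ℝ} {Za Zb : ℝ}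

lemma integral_sqrt_div_withDensity (ha : Measurable ρa) (ha0 : ∀ x, 0 ≤ ρa x)
    (hb0 : ∀ x, 0 ≤ ρb x) (hZa : 0 ≤ Za) :
    ∫ x, √(ρb x / ρa x) ∂μ.withDensity (fun x => ENNReal.ofReal (ρa x / Za)) =
      (∫ x, √(ρa x * ρb x) ∂μ) / Za := by
  rw [integral_withDensity_ofReal (ha.div_const Za) fun x => div_nonneg (ha0 x) hZa,
    ← integral_div]
  congr 1 with x
  rw [div_mul_eq_mul_div, mul_sqrt_div_eq_sqrt_mul (ha0 x) (hb0 x)]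

lemma integral_div_withDensity (ha : Measurable ρa) (ha0 : ∀ x, 0 ≤ ρa x) (hZa : 0 ≤ Za)
    (hab : ∀ x, ρa x = 0 → ρb x = 0) :
    ∫ x, ρb x / ρa x ∂μ.withDensity (fun x => ENNReal.ofReal (ρa x / Za)) =
      (∫ x, ρb x ∂μ) / Za := by
  rw [integral_withDensity_ofReal (ha.div_const Za) fun x => div_nonneg (ha0 x) hZa,
    ← integral_div]
  congr 1 with x
  rw [div_mul_eq_mul_div, mul_div_cancel_of_imp' (hab x)]

lemma integrable_div_withDensity (ha : Measurable ρa) (ha0 : ∀ x, 0 ≤ ρa x) (hZa : 0 ≤ Za)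
    (hb : Integrable ρb μ) (hab : ∀ x, ρa x = 0 → ρb x = 0) :
    Integrable (fun x => ρb x / ρa x) (μ.withDensity fun x => ENNReal.ofReal (ρa x / Za)) := by
  rw [integrable_withDensity_ofReal_iff (ha.div_const Za) fun x => div_nonneg (ha0 x) hZa]
  refine (hb.div_const Za).congr (ae_of_all _ fun x => ?_)
  dsimp only
  rw [div_mul_eq_mul_div, mul_div_cancel_of_imp' (hab x)]

lemma integral_sqrt_div_mul_div (ha0 : ∀ x, 0 ≤ ρa x) (hb0 : ∀ x, 0 ≤ ρb x) :
    ∫ x, √(ρa x / Za * (ρb x / Zb)) ∂μ = (∫ x, √(ρa x * ρb x) ∂μ) / √(Za * Zb) := by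
  rw [← integral_div]
  congr 1 with x
  rw [div_mul_div_comm, sqrt_div (mul_nonneg (ha0 x) (hb0 x))]

lemma integrable_sqrt_mul (ha : Integrable ρa μ) (hb : Integrable ρb μ)
    (ha0 : ∀ x, 0 ≤ ρa x) (hb0 : ∀ x, 0 ≤ ρb x) :
    Integrable (fun x => √(ρa x * ρb x)) μ :=
  (ha.add hb).mono' (continuous_sqrt.comp_aestronglyMeasurable (ha.1.mul hb.1)) <|
    ae_of_all _ fun x => by
      rw [norm_of_nonneg (sqrt_nonneg _), Pi.add_apply,
        ← sqrt_mul_self (add_nonneg (ha0 x) (hb0 x))]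
      exact sqrt_le_sqrt (by nlinarith [ha0 x, hb0 x])

theorem variance_div_sq_integral_sqrt_div
    (ha : Measurable ρa) (hb : Measurable ρb) (ha0 : ∀ x, 0 ≤ ρa x) (hb0 : ∀ x, 0 ≤ ρb x)
    (ha_int : Integrable ρa μ) (hb_int : Integrable ρb μ) (hab : ∀ x, ρa x = 0 → ρb x = 0)
    (hZa : ∫ x, ρa x ∂μ = Za) (hZb : ∫ x, ρb x ∂μ = Zb) (hZa_pos : 0 < Za) (hZb_pos : 0 < Zb)
    (hB : ∫ x, √(ρa x * ρb x) ∂μ ≠ 0) :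
    variance (fun x => √(ρb x / ρa x)) (μ.withDensity fun x => ENNReal.ofReal (ρa x / Za))
        / (∫ x, √(ρb x / ρa x) ∂μ.withDensity (fun x => ENNReal.ofReal (ρa x / Za))) ^ 2
      = (∫ x, √(ρa x / Za * (ρb x / Zb)) ∂μ)⁻¹ ^ 2 - 1 := by
  have := isProbabilityMeasure_withDensity_ofReal_div ha_int ha0 hZa hZa_pos
  have hsq : ∀ x, √(ρb x / ρa x) ^ 2 = ρb x / ρa x := fun x =>
    sq_sqrt (div_nonneg (hb0 x) (ha0 x))
  have hmem : MemLp (fun x => √(ρb x / ρa x)) 2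
      (μ.withDensity fun x => ENNReal.ofReal (ρa x / Za)) :=
    (memLp_two_iff_integrable_sq (hb.div ha).sqrt.aestronglyMeasurable).2 <|
      (integrable_div_withDensity ha ha0 hZa_pos.le hb_int hab).congr
        (ae_of_all _ fun x => (hsq x).symm)
  rw [variance_eq_sub hmem]
  simp only [Pi.pow_apply, hsq]
  rw [integral_div_withDensity ha ha0 hZa_pos.le hab, integral_sqrt_div_withDensity ha ha0 hb0
    hZa_pos.le, integral_sqrt_div_mul_div ha0 hb0, hZb, inv_div, div_pow (√(Za * Zb)),
    sq_sqrt (mul_pos hZa_pos hZb_pos).le]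
  field_simp

end GeometricBridge

lemma integral_pos_of_eqOn_of_setIntegral_pos {X : Type*} [MeasurableSpace X] {μ : Measure X}
    {g h : X → ℝ} {s : Set X} (hs : MeasurableSet s) (hh : 0 < ∫ x in s, h x ∂μ)
    (hg : Integrable g μ) (hg0 : ∀ x, 0 ≤ g x) (hgh : Set.EqOn g h s) :
    0 < ∫ x, g x ∂μ :=
  (hh.trans_eq (setIntegral_congr_fun hs hgh).symm).trans_le
    (setIntegral_le_integral hg (ae_of_all _ hg0))

section TiltedDensity

variable {X : Type*} {ρ₀ f : X → ℝ} {γ β : ℝ}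

noncomputable def tiltedDensity (ρ₀ f : X → ℝ) (γ β : ℝ) (x : X) : ℝ :=
  ρ₀ x * exp (β * min (γ - f x) 0)

lemma tiltedDensity_nonneg (hρ₀ : ∀ x, 0 ≤ ρ₀ x) (x : X) : 0 ≤ tiltedDensity ρ₀ f γ β x :=
  mul_nonneg (hρ₀ x) (exp_pos _).le

lemma tiltedDensity_le (hρ₀ : ∀ x, 0 ≤ ρ₀ x) (hβ : 0 ≤ β) (x : X) :
    tiltedDensity ρ₀ f γ β x ≤ ρ₀ x :=
  mul_le_of_le_one_right (hρ₀ x) <|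
    exp_le_one_iff.2 (mul_nonpos_of_nonneg_of_nonpos hβ (min_le_right _ _))

lemma tiltedDensity_of_le {x : X} (hx : f x ≤ γ) : tiltedDensity ρ₀ f γ β x = ρ₀ x := by
  simp [tiltedDensity, min_eq_right (sub_nonneg.2 hx)]

lemma tiltedDensity_eq_zero_iff {x : X} : tiltedDensity ρ₀ f γ β x = 0 ↔ ρ₀ x = 0 := by
  simp [tiltedDensity]

lemma measurable_tiltedDensity [MeasurableSpace X] (hρ₀ : Measurable ρ₀) (hf : Measurable f) :
    Measurable (tiltedDensity ρ₀ f γ β) := by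
  unfold tiltedDensity
  fun_prop

lemma integrable_tiltedDensity [MeasurableSpace X] {μ : Measure X} (hρ₀ : Integrable ρ₀ μ)
    (hρ₀m : Measurable ρ₀) (hρ₀0 : ∀ x, 0 ≤ ρ₀ x) (hf : Measurable f) (hβ : 0 ≤ β) :
    Integrable (tiltedDensity ρ₀ f γ β) μ :=
  hρ₀.mono (measurable_tiltedDensity hρ₀m hf).aestronglyMeasurable <| ae_of_all _ fun x => by
    simpa [abs_of_nonneg (tiltedDensity_nonneg hρ₀0 x), abs_of_nonneg (hρ₀0 x)]
      using tiltedDensity_le hρ₀0 hβ x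

end TiltedDensity

theorem bridge_cv_eq_bhattacharyya_general
    {X : Type*} [MeasurableSpace X] (μ : Measure X)
    (ρ₀ : X → ℝ) (hρ₀meas : Measurable ρ₀) (hρ₀nonneg : ∀ x, 0 ≤ ρ₀ x)
    (hρ₀int : Integrable ρ₀ μ)
    (f : X → ℝ) (hfmeas : Measurable f) (γ : ℝ)
    (ρ : ℝ → X → ℝ) (hρ : ∀ β x, ρ β x = ρ₀ x * Real.exp (β * min (γ - f x) 0))
    (Z : ℝ → ℝ) (hZ : ∀ β, Z β = ∫ x, ρ β x ∂μ)
    (P : ℝ → Measure X)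
    (hP : ∀ β, P β = μ.withDensity (fun x => ENNReal.ofReal (ρ β x / Z β)))
    (pγ : ℝ) (hpγ : pγ = (Z 0)⁻¹ * ∫ x in {x | f x ≤ γ}, ρ₀ x ∂μ)
    (hpγpos : 0 < pγ)
    (β β' : ℝ) (hβ : 0 ≤ β) (hββ' : β ≤ β')
    (G : ℝ) (hG : G = ∫ x, Real.sqrt ((ρ β x / Z β) * (ρ β' x / Z β')) ∂μ) :
    variance (fun x => Real.sqrt (ρ β' x / ρ β x)) (P β)
      / (∫ x, Real.sqrt (ρ β' x / ρ β x) ∂(P β)) ^ 2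
    + variance (fun x => Real.sqrt (ρ β x / ρ β' x)) (P β')
      / (∫ x, Real.sqrt (ρ β x / ρ β' x) ∂(P β')) ^ 2
    = 2 * (G⁻¹ ^ 2 - 1) := by
  obtain rfl : ρ = tiltedDensity ρ₀ f γ := funext₂ hρ
  have hS : MeasurableSet {x | f x ≤ γ} := measurableSet_le hfmeas measurable_const
  have hmass : 0 < ∫ x in {x | f x ≤ γ}, ρ₀ x ∂μ :=
    pos_of_mul_pos_right (hpγ ▸ hpγpos) <| inv_nonneg.2 <|
      hZ 0 ▸ integral_nonneg (tiltedDensity_nonneg hρ₀nonneg)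
  have hρ_int : ∀ b, 0 ≤ b → Integrable (tiltedDensity ρ₀ f γ b) μ := fun b hb =>
    integrable_tiltedDensity hρ₀int hρ₀meas hρ₀nonneg hfmeas hb
  have hZ_pos : ∀ b, 0 ≤ b → 0 < Z b := fun b hb => hZ b ▸
    integral_pos_of_eqOn_of_setIntegral_pos hS hmass (hρ_int b hb)
      (tiltedDensity_nonneg hρ₀nonneg) fun x hx => tiltedDensity_of_le hx
  have hβ' : 0 ≤ β' := hβ.trans hββ'
  have hB_pos : 0 < ∫ x, √(tiltedDensity ρ₀ f γ β x * tiltedDensity ρ₀ f γ β' x) ∂μ :=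
    integral_pos_of_eqOn_of_setIntegral_pos hS hmass
      (integrable_sqrt_mul (hρ_int β hβ) (hρ_int β' hβ') (tiltedDensity_nonneg hρ₀nonneg)
        (tiltedDensity_nonneg hρ₀nonneg)) (fun _ => sqrt_nonneg _) fun x hx => by
      simp only [tiltedDensity_of_le hx, sqrt_mul_self (hρ₀nonneg x)]
  have hcv := fun b b' (hb : 0 ≤ b) (hb' : 0 ≤ b') => variance_div_sq_integral_sqrt_div
    (measurable_tiltedDensity hρ₀meas hfmeas) (measurable_tiltedDensity hρ₀meas hfmeas)
    (tiltedDensity_nonneg hρ₀nonneg) (tiltedDensity_nonneg hρ₀nonneg) (hρ_int b hb)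
    (hρ_int b' hb') (fun x => by simp only [tiltedDensity_eq_zero_iff, imp_self])
    (hZ b).symm (hZ b').symm (hZ_pos b hb) (hZ_pos b' hb')
  rw [hP, hP, hcv β β' hβ hβ' hB_pos.ne',
    hcv β' β hβ' hβ (by simpa only [mul_comm] using hB_pos.ne'), hG]
  simp only [mul_comm]
  ring

/-- The sum of the squared coefficients of variation of the numerator and denominator of
the geometric-bridge estimator equals `2·(G⁻² − 1)`, where `G` is the Bhattacharyya
coefficient of `P_β` and `P_{β'}`. -/
theorem bridge_cv_eq_bhattacharyya
    {X : Type*} [MeasurableSpace X] (μ : Measure X) [SigmaFinite μ]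
    (ρ₀ : X → ℝ) (hρ₀meas : Measurable ρ₀) (hρ₀nonneg : ∀ x, 0 ≤ ρ₀ x)
    (hρ₀int : Integrable ρ₀ μ)
    (f : X → ℝ) (hfmeas : Measurable f) (γ : ℝ)
    (ρ : ℝ → X → ℝ) (hρ : ∀ β x, ρ β x = ρ₀ x * Real.exp (β * min (γ - f x) 0))
    (Z : ℝ → ℝ) (hZ : ∀ β, Z β = ∫ x, ρ β x ∂μ)
    (hZ₀pos : 0 < Z 0)
    (P : ℝ → Measure X)
    (hP : ∀ β, P β = μ.withDensity (fun x => ENNReal.ofReal (ρ β x / Z β)))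
    (pγ : ℝ) (hpγ : pγ = (Z 0)⁻¹ * ∫ x in {x | f x ≤ γ}, ρ₀ x ∂μ)
    (hpγpos : 0 < pγ)
    (β β' : ℝ) (hβ : 0 ≤ β) (hββ' : β ≤ β')
    (ZB : ℝ) (hZB : ZB = ∫ x, Real.sqrt (ρ β x * ρ β' x) ∂μ) (hZBpos : 0 < ZB)
    (G : ℝ) (hG : G = ∫ x, Real.sqrt ((ρ β x / Z β) * (ρ β' x / Z β')) ∂μ) :
    variance (fun x => Real.sqrt (ρ β' x / ρ β x)) (P β)
      / (∫ x, Real.sqrt (ρ β' x / ρ β x) ∂(P β)) ^ 2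
    + variance (fun x => Real.sqrt (ρ β x / ρ β' x)) (P β')
      / (∫ x, Real.sqrt (ρ β x / ρ β' x) ∂(P β')) ^ 2
    = 2 * (G⁻¹ ^ 2 - 1) :=
  bridge_cv_eq_bhattacharyya_general μ ρ₀ hρ₀meas hρ₀nonneg hρ₀int f hfmeas γ ρ hρ Z hZ P hP pγ hpγ
    hpγpos β β' hβ hββ' G hG
end

section
/- For all β, β′ ≥ 0 and all x ∈ X one has √(ρ_β(x)·ρ_{β′}(x)) = ρ_{(β+β′)/2}(x); consequently the geometric-bridge normalizer satisfies ∫ √(ρ_β·ρ_{β′}) dμ = Z_{(β+β′)/2}, and if p_γ > 0 then G(P_β, P_{β′}) = Z_{(β+β′)/2}/√(Z_β·Z_{β′}) ≥ p_γ > 0. -/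
open MeasureTheory Real

/-- The geometric bridge of two tilted densities is itself a tilted density:
`√(ρ_β·ρ_{β'}) = ρ_{(β+β')/2}` pointwise, hence `∫ √(ρ_β·ρ_{β'}) dμ = Z_{(β+β')/2}`,
and if `p_γ > 0` then `G(P_β, P_{β'}) = Z_{(β+β')/2}/√(Z_β·Z_{β'}) ≥ p_γ > 0`. -/
theorem geometric_bridge_is_tilted
    {X : Type*} [MeasurableSpace X] (μ : Measure X) [SigmaFinite μ]
    (ρ₀ : X → ℝ) (hρ₀meas : Measurable ρ₀) (hρ₀nonneg : ∀ x, 0 ≤ ρ₀ x)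
    (hρ₀int : Integrable ρ₀ μ)
    (f : X → ℝ) (hfmeas : Measurable f) (γ : ℝ)
    (ρ : ℝ → X → ℝ) (hρ : ∀ β x, ρ β x = ρ₀ x * Real.exp (β * min (γ - f x) 0))
    (Z : ℝ → ℝ) (hZ : ∀ β, Z β = ∫ x, ρ β x ∂μ)
    (hZ₀pos : 0 < Z 0)
    (pγ : ℝ) (hpγ : pγ = (Z 0)⁻¹ * ∫ x in {x | f x ≤ γ}, ρ₀ x ∂μ)
    (G : ℝ → ℝ → ℝ)
    (hG : ∀ b b', G b b' = ∫ x, Real.sqrt ((ρ b x / Z b) * (ρ b' x / Z b')) ∂μ)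
    (β β' : ℝ) (hβ : 0 ≤ β) (hβ' : 0 ≤ β') :
    (∀ x, Real.sqrt (ρ β x * ρ β' x) = ρ ((β + β') / 2) x)
    ∧ (∫ x, Real.sqrt (ρ β x * ρ β' x) ∂μ) = Z ((β + β') / 2)
    ∧ (0 < pγ →
        G β β' = Z ((β + β') / 2) / Real.sqrt (Z β * Z β')
        ∧ pγ ≤ G β β' ∧ 0 < pγ) := by
  -- basic facts
  have hρnonneg : ∀ b x, 0 ≤ ρ b x := fun b x => by
    rw [hρ]; exact mul_nonneg (hρ₀nonneg x) (Real.exp_pos _).le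
  have hρle : ∀ b, 0 ≤ b → ∀ x, ρ b x ≤ ρ₀ x := fun b hb x => by
    rw [hρ]
    calc ρ₀ x * Real.exp (b * min (γ - f x) 0) ≤ ρ₀ x * 1 := by
          apply mul_le_mul_of_nonneg_left _ (hρ₀nonneg x)
          rw [← Real.exp_zero]
          exact Real.exp_le_exp.2 (mul_nonpos_of_nonneg_of_nonpos hb (min_le_right _ _))
      _ = ρ₀ x := mul_one _
  have hρmeas : ∀ b, Measurable (ρ b) := fun b => by
    have : ρ b = fun x => ρ₀ x * Real.exp (b * min (γ - f x) 0) := funext (hρ b)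
    rw [this]
    exact hρ₀meas.mul ((measurable_const.mul ((measurable_const.sub hfmeas).min measurable_const)).exp)
  have hint : ∀ b, 0 ≤ b → Integrable (ρ b) μ := fun b hb =>
    hρ₀int.mono' (hρmeas b).aestronglyMeasurable
      (Filter.Eventually.of_forall fun x => by
        rw [Real.norm_eq_abs, abs_of_nonneg (hρnonneg b x)]; exact hρle b hb x)
  -- pointwise sqrt identity
  have hpt : ∀ x, Real.sqrt (ρ β x * ρ β' x) = ρ ((β + β') / 2) x := by
    intro x
    simp only [hρ]
    have h1 : ρ₀ x * Real.exp (β * min (γ - f x) 0) * (ρ₀ x * Real.exp (β' * min (γ - f x) 0))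
        = ρ₀ x ^ 2 * Real.exp ((β + β') * min (γ - f x) 0) := by
      rw [mul_mul_mul_comm, ← Real.exp_add, ← sq]; ring_nf
    rw [h1, Real.sqrt_mul (sq_nonneg _), Real.sqrt_sq (hρ₀nonneg x), ← Real.exp_half]
    ring_nf
  have hmid : (0:ℝ) ≤ (β + β') / 2 := by positivity
  have hZmid : (∫ x, Real.sqrt (ρ β x * ρ β' x) ∂μ) = Z ((β + β') / 2) := by
    rw [hZ]; exact integral_congr_ae (Filter.Eventually.of_forall hpt)
  refine ⟨hpt, hZmid, fun hpos => ?_⟩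
  -- set integral facts
  have hS : MeasurableSet {x | f x ≤ γ} := measurableSet_le hfmeas measurable_const
  have hIle : ∀ b, 0 ≤ b → (∫ x in {x | f x ≤ γ}, ρ₀ x ∂μ) ≤ Z b := by
    intro b hb
    rw [hZ]
    have heq : (∫ x in {x | f x ≤ γ}, ρ₀ x ∂μ) = ∫ x in {x | f x ≤ γ}, ρ b x ∂μ := by
      refine setIntegral_congr_fun hS fun x hx => ?_
      have hx' : f x ≤ γ := hx
      have hm : min (γ - f x) 0 = 0 := min_eq_right (sub_nonneg.2 hx')
      rw [hρ, hm, mul_zero, Real.exp_zero, mul_one]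
    rw [heq]
    exact setIntegral_le_integral (hint b hb) (Filter.Eventually.of_forall (hρnonneg b))
  have hIpos : 0 < ∫ x in {x | f x ≤ γ}, ρ₀ x ∂μ := by
    by_contra h
    push_neg at h
    have : pγ ≤ 0 := by
      rw [hpγ]
      exact mul_nonpos_of_nonneg_of_nonpos (inv_nonneg.2 hZ₀pos.le) h
    linarith
  have hZβpos : 0 < Z β := lt_of_lt_of_le hIpos (hIle β hβ)
  have hZβ'pos : 0 < Z β' := lt_of_lt_of_le hIpos (hIle β' hβ')
  have hZleZ0 : ∀ b, 0 ≤ b → Z b ≤ Z 0 := by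
    intro b hb
    rw [hZ, hZ 0]
    refine integral_mono (hint b hb) (hint 0 le_rfl) fun x => ?_
    rw [hρ 0 x, zero_mul, Real.exp_zero, mul_one]
    exact hρle b hb x
  have hZ0eq : Z 0 = ∫ x, ρ₀ x ∂μ := by
    rw [hZ]
    refine integral_congr_ae (Filter.Eventually.of_forall fun x => ?_)
    rw [hρ 0 x, zero_mul, Real.exp_zero, mul_one]
  -- G formula
  have hGeq : G β β' = Z ((β + β') / 2) / Real.sqrt (Z β * Z β') := by
    rw [hG]
    have : ∀ x, Real.sqrt ((ρ β x / Z β) * (ρ β' x / Z β'))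
        = Real.sqrt (ρ β x * ρ β' x) / Real.sqrt (Z β * Z β') := by
      intro x
      rw [div_mul_div_comm, Real.sqrt_div (mul_nonneg (hρnonneg β x) (hρnonneg β' x))]
    simp only [this]
    rw [integral_div, hZmid]
  refine ⟨hGeq, ?_, hpos⟩
  rw [hGeq, hpγ, inv_mul_eq_div]
  have hsqrtpos : 0 < Real.sqrt (Z β * Z β') :=
    Real.sqrt_pos.2 (mul_pos hZβpos hZβ'pos)
  have hsqrtle : Real.sqrt (Z β * Z β') ≤ Z 0 := by
    calc Real.sqrt (Z β * Z β') ≤ Real.sqrt (Z 0 * Z 0) :=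
          Real.sqrt_le_sqrt (mul_le_mul (hZleZ0 β hβ) (hZleZ0 β' hβ') hZβ'pos.le hZ₀pos.le)
      _ = Z 0 := by rw [Real.sqrt_mul_self hZ₀pos.le]
  exact div_le_div₀ (le_trans hIpos.le (hIle _ hmid)) (hIle _ hmid) hsqrtpos hsqrtle
end
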